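/- arXiv:1612.08221 — 4 statements merged into one kernel-verified Lean document; each statement's English description precedes it below -/
import Mathlib

section
/- If g : [0,1] → [0,1] is continuous and I, J are closed subintervals with J ⊆ g(I), then there exists a closed subinterval Q ⊆ I with g(Q) = J. -/
/-!
Pick preimages `x` of `c` and `y` of `d` in `I`; say `x ≤ y` (otherwise reverse the order of the
values). Let `p` be the last point of `[x, y]` where `g = c` and `q` the first point of `[p, y]`
where `g = d`. By the intermediate value theorem `g` cannot drop below `c` on `[p, y]`, nor rise
above `d` on `[p, q]`, so `g '' [p, q] ⊆ [c, d]`; the reverse inclusion is again the intermediate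
value theorem.
-/

open Set

section

variable {α δ : Type*} [ConditionallyCompleteLinearOrder α] [TopologicalSpace α]
  [OrderTopology α] [LinearOrder δ] [TopologicalSpace δ] [OrderClosedTopology δ]
  {g : α → δ} {u v p q t : α} {c d : δ}

theorem ContinuousOn.isCompact_Icc_inter_preimage_singleton (hg : ContinuousOn g (Icc u v))
    (c : δ) : IsCompact (Icc u v ∩ g ⁻¹' {c}) :=
  isCompact_Icc.of_isClosed_subset
    (hg.preimage_isClosed_of_isClosed isClosed_Icc isClosed_singleton) inter_subset_left

variable [DenselyOrdered α]

theorem ContinuousOn.le_apply_of_isGreatest (hg : ContinuousOn g (Icc u v))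
    (hp : IsGreatest (Icc u v ∩ g ⁻¹' {c}) p) (hcv : c ≤ g v) (ht : t ∈ Icc p v) :
    c ≤ g t := by
  obtain ⟨⟨⟨hup, -⟩, hgp⟩, hp_max⟩ := hp
  by_contra! hlt
  obtain ⟨s, hs, hgs⟩ := intermediate_value_Icc ht.2
    (hg.mono (Icc_subset_Icc (hup.trans ht.1) le_rfl)) ⟨hlt.le, hcv⟩
  have hsp : s ≤ p := hp_max ⟨⟨hup.trans (ht.1.trans hs.1), hs.2⟩, hgs⟩
  have htp : t = p := le_antisymm (hs.1.trans hsp) ht.1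
  exact hlt.ne (htp ▸ hgp)

theorem ContinuousOn.apply_le_of_isLeast (hg : ContinuousOn g (Icc u v))
    (hq : IsLeast (Icc u v ∩ g ⁻¹' {d}) q) (hud : g u ≤ d) (ht : t ∈ Icc u q) :
    g t ≤ d := by
  obtain ⟨⟨⟨-, hqv⟩, hgq⟩, hq_min⟩ := hq
  by_contra! hlt
  obtain ⟨s, hs, hgs⟩ := intermediate_value_Icc ht.1
    (hg.mono (Icc_subset_Icc le_rfl (ht.2.trans hqv))) ⟨hud, hlt.le⟩
  have hqs : q ≤ s := hq_min ⟨⟨hs.1, hs.2.trans (ht.2.trans hqv)⟩, hgs⟩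
  have htq : t = q := le_antisymm ht.2 (hqs.trans hs.2)
  exact hlt.ne' (htq ▸ hgq)

theorem ContinuousOn.exists_image_Icc_eq_Icc (hg : ContinuousOn g (Icc u v)) (huv : u ≤ v)
    (hcd : c ≤ d) (hgu : g u = c) (hgv : g v = d) :
    ∃ p q, u ≤ p ∧ p ≤ q ∧ q ≤ v ∧ g '' Icc p q = Icc c d := by
  obtain ⟨p, hp⟩ := (hg.isCompact_Icc_inter_preimage_singleton c).exists_isGreatest
    ⟨u, ⟨le_rfl, huv⟩, hgu⟩
  obtain ⟨⟨hup, hpv⟩, hgp : g p = c⟩ := hp.1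
  have hgpv : ContinuousOn g (Icc p v) := hg.mono (Icc_subset_Icc hup le_rfl)
  obtain ⟨q, hq⟩ := (hgpv.isCompact_Icc_inter_preimage_singleton d).exists_isLeast
    ⟨v, ⟨hpv, le_rfl⟩, hgv⟩
  obtain ⟨⟨hpq, hqv⟩, hgq : g q = d⟩ := hq.1
  refine ⟨p, q, hup, hpq, hqv, Subset.antisymm ?_ ?_⟩
  · rintro _ ⟨t, ht, rfl⟩
    exact ⟨hg.le_apply_of_isGreatest hp (hgv ▸ hcd) ⟨ht.1, ht.2.trans hqv⟩,
      hgpv.apply_le_of_isLeast hq (hgp ▸ hcd) ht⟩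
  · simpa only [hgp, hgq] using
      intermediate_value_Icc hpq (hgpv.mono (Icc_subset_Icc le_rfl hqv))

theorem ContinuousOn.exists_image_Icc_eq_of_Icc_subset_image {a b : α}
    (hg : ContinuousOn g (Icc a b)) (hcd : c ≤ d) (hcov : Icc c d ⊆ g '' Icc a b) :
    ∃ p q, a ≤ p ∧ p ≤ q ∧ q ≤ b ∧ g '' Icc p q = Icc c d := by
  obtain ⟨x, hx, hgx⟩ := hcov ⟨le_rfl, hcd⟩
  obtain ⟨y, hy, hgy⟩ := hcov ⟨hcd, le_rfl⟩
  rcases le_total x y with hxy | hyx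
  · obtain ⟨p, q, hxp, hpq, hqy, himage⟩ :=
      (hg.mono (Icc_subset_Icc hx.1 hy.2)).exists_image_Icc_eq_Icc hxy hcd hgx hgy
    exact ⟨p, q, hx.1.trans hxp, hpq, hqy.trans hy.2, himage⟩
  · -- `g` runs from `d` down to `c` on `[y, x]`, i.e. upwards in the order dual of `δ`.
    have hg' : ContinuousOn (OrderDual.toDual ∘ g) (Icc y x) :=
      continuous_toDual.comp_continuousOn (hg.mono (Icc_subset_Icc hy.1 hx.2))
    obtain ⟨p, q, hyp, hpq, hqx, himage⟩ := hg'.exists_image_Icc_eq_Icc hyx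
      (OrderDual.toDual_le_toDual.2 hcd) (congrArg OrderDual.toDual hgy)
      (congrArg OrderDual.toDual hgx)
    refine ⟨p, q, hy.1.trans hyp, hpq, hqx.trans hx.2, ?_⟩
    ext z
    simpa [and_comm] using congrArg (OrderDual.toDual z ∈ ·) himage

end

theorem exists_subinterval_mapping_onto_general (g : ℝ → ℝ)
    (hg : ContinuousOn g (Icc 0 1))
    (a b c d : ℝ) (h0 : 0 ≤ a) (h1 : b ≤ 1)
    (hcd : c ≤ d)
    (hcov : Icc c d ⊆ g '' Icc a b) :
    ∃ p q : ℝ, a ≤ p ∧ p ≤ q ∧ q ≤ b ∧ g '' Icc p q = Icc c d :=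
  (hg.mono (Icc_subset_Icc h0 h1)).exists_image_Icc_eq_of_Icc_subset_image hcd hcov

theorem exists_subinterval_mapping_onto (g : ℝ → ℝ)
    (hg : ContinuousOn g (Icc 0 1)) (hmap : MapsTo g (Icc 0 1) (Icc 0 1))
    (a b c d : ℝ) (h0 : 0 ≤ a) (hab : a ≤ b) (h1 : b ≤ 1)
    (h0' : 0 ≤ c) (hcd : c ≤ d) (h1' : d ≤ 1)
    (hcov : Icc c d ⊆ g '' Icc a b) :
    ∃ p q : ℝ, a ≤ p ∧ p ≤ q ∧ q ≤ b ∧ g '' Icc p q = Icc c d :=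
  exists_subinterval_mapping_onto_general g hg a b c d h0 h1 hcd hcov
end

section
/- If g : [0,1] → [0,1] is continuous and (Iᵢ)_{i∈ℕ} is an infinite sequence of closed subintervals with Iᵢ₊₁ ⊆ g(Iᵢ) for all i, then there exists a decreasing sequence of closed subintervals Q₀ ⊇ Q₁ ⊇ Q₂ ⊇ ⋯ with Q₀ = I₀ and gⁱ(Qᵢ) = Iᵢ for all i. -/
/-!
Given `Iᵢ₊₁ ⊆ g(Iᵢ) = gⁱ⁺¹(Qᵢ)`, the interval `Qᵢ₊₁` is carved out of `Qᵢ` by the one-step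
shrinking lemma for the continuous map `gⁱ⁺¹`: if `f` is continuous on `[u, v]`, take `p` the
last point of `[u, v]` with `f p = f u` and `q` the first point of `[p, v]` with `f q = f v`;
between them `f` cannot leave the interval spanned by `f u` and `f v` without taking one of
these values again, so `f [p, q] = [[f u, f v]]`.
-/

open Set

theorem mem_uIcc_or_mem_uIcc_of_notMem_uIcc {β : Type*} [LinearOrder β] {a b c : β}
    (hc : c ∉ uIcc a b) : a ∈ uIcc c b ∨ b ∈ uIcc a c := by
  grind [mem_uIcc]

theorem exists_nat_seq_of_step {α : Type*} (P : ℕ → α → Prop) (R : α → α → Prop)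
    {x₀ : α} (h₀ : P 0 x₀) (hstep : ∀ i x, P i x → ∃ y, P (i + 1) y ∧ R y x) :
    ∃ x : ℕ → α, x 0 = x₀ ∧ ∀ i, P i (x i) ∧ R (x (i + 1)) (x i) := by
  choose next hnextP hnextR using hstep
  let x : (i : ℕ) → {y // P i y} := fun i =>
    Nat.rec ⟨x₀, h₀⟩ (fun n y => ⟨next n y.1 y.2, hnextP n y.1 y.2⟩) i
  exact ⟨fun i => (x i).1, rfl, fun i => ⟨(x i).2, hnextR i (x i).1 (x i).2⟩⟩

section Shrinking

variable {α δ : Type*} [ConditionallyCompleteLinearOrder α] [TopologicalSpace α]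
  [OrderTopology α] [LinearOrder δ] [TopologicalSpace δ] [OrderClosedTopology δ] {f : α → δ}

theorem ContinuousOn.isCompact_level_set {u v : α} (hf : ContinuousOn f (Icc u v)) (y : δ) :
    IsCompact {x ∈ Icc u v | f x = y} :=
  isCompact_Icc.of_isClosed_subset
    (hf.preimage_isClosed_of_isClosed isClosed_Icc isClosed_singleton) inter_subset_left

variable [DenselyOrdered α]

theorem exists_Icc_image_eq_uIcc {u v : α} (huv : u ≤ v) (hf : ContinuousOn f (Icc u v)) :
    ∃ p q, u ≤ p ∧ p ≤ q ∧ q ≤ v ∧ f '' Icc p q = uIcc (f u) (f v) := by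
  obtain ⟨p, ⟨⟨hup, hpv⟩, hfp⟩, hp_last⟩ :=
    (hf.isCompact_level_set (f u)).exists_isGreatest ⟨u, ⟨le_rfl, huv⟩, rfl⟩
  have hf' : ContinuousOn f (Icc p v) := hf.mono (Icc_subset_Icc_left hup)
  obtain ⟨q, ⟨⟨hpq, hqv⟩, hfq⟩, hq_first⟩ :=
    (hf'.isCompact_level_set (f v)).exists_isLeast ⟨v, ⟨hpv, le_rfl⟩, rfl⟩
  have hfpq : ContinuousOn f (Icc p q) := hf'.mono (Icc_subset_Icc_right hqv)
  have ivt {s t : α} (hs : p ≤ s) (hst : s ≤ t) (ht : t ≤ q) :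
      uIcc (f s) (f t) ⊆ f '' Icc s t := by
    have h := intermediate_value_uIcc (hfpq.mono (uIcc_of_le hst ▸ Icc_subset_Icc hs ht))
    rwa [uIcc_of_le hst] at h
  have hsupset : uIcc (f u) (f v) ⊆ f '' Icc p q := by
    simpa only [hfp, hfq] using ivt le_rfl hpq le_rfl
  refine ⟨p, q, hup, hpq, hqv, subset_antisymm ?_ hsupset⟩
  rintro _ ⟨x, ⟨hpx, hxq⟩, rfl⟩
  by_contra hx
  -- an escaping value `f x` forces `f` to retake `f u` on `[x, q]` or `f v` on `[p, x]`
  rcases mem_uIcc_or_mem_uIcc_of_notMem_uIcc hx with hu | hv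
  · obtain ⟨y, ⟨hxy, hyq⟩, hfy⟩ := ivt hpx hxq le_rfl (hfq ▸ hu)
    have hyp : y ≤ p := hp_last ⟨⟨hup.trans (hpx.trans hxy), hyq.trans hqv⟩, hfy⟩
    exact hx (le_antisymm (hxy.trans hyp) hpx ▸ hfp ▸ left_mem_uIcc)
  · obtain ⟨y, ⟨hpy, hyx⟩, hfy⟩ := ivt le_rfl hpx hxq (hfp ▸ hv)
    have hqy : q ≤ y := hq_first ⟨⟨hpy, hyx.trans (hxq.trans hqv)⟩, hfy⟩
    exact hx (le_antisymm hxq (hqy.trans hyx) ▸ hfq ▸ right_mem_uIcc)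

theorem exists_Icc_subset_uIcc_image_eq_uIcc {x y : α} (hf : ContinuousOn f (uIcc x y)) :
    ∃ p q, p ≤ q ∧ Icc p q ⊆ uIcc x y ∧ f '' Icc p q = uIcc (f x) (f y) := by
  rcases le_total x y with h | h
  · obtain ⟨p, q, hxp, hpq, hqy, himg⟩ := exists_Icc_image_eq_uIcc h (uIcc_of_le h ▸ hf)
    exact ⟨p, q, hpq, uIcc_of_le h ▸ Icc_subset_Icc hxp hqy, himg⟩
  · obtain ⟨p, q, hyp, hpq, hqx, himg⟩ := exists_Icc_image_eq_uIcc h (uIcc_of_ge h ▸ hf)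
    exact ⟨p, q, hpq, uIcc_of_ge h ▸ Icc_subset_Icc hyp hqx, uIcc_comm (f x) (f y) ▸ himg⟩

theorem exists_Icc_subset_image_eq_Icc {u v : α} {c d : δ} (hf : ContinuousOn f (Icc u v))
    (hcd : c ≤ d) (hsub : Icc c d ⊆ f '' Icc u v) :
    ∃ p q, p ≤ q ∧ Icc p q ⊆ Icc u v ∧ f '' Icc p q = Icc c d := by
  obtain ⟨x, hx, rfl⟩ := hsub (left_mem_Icc.2 hcd)
  obtain ⟨y, hy, rfl⟩ := hsub (right_mem_Icc.2 hcd)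
  obtain ⟨p, q, hpq, hpq_sub, himg⟩ :=
    exists_Icc_subset_uIcc_image_eq_uIcc (hf.mono (uIcc_subset_Icc hx hy))
  exact ⟨p, q, hpq, hpq_sub.trans (uIcc_subset_Icc hx hy), himg.trans (uIcc_of_le hcd)⟩

end Shrinking

theorem shrinking_lemma_interval (g : ℝ → ℝ)
    (hg : ContinuousOn g (Icc 0 1)) (hmap : MapsTo g (Icc 0 1) (Icc 0 1))
    (a b : ℕ → ℝ)
    (hab : ∀ i, a i ≤ b i)
    (hsub : ∀ i, Icc (a i) (b i) ⊆ Icc (0:ℝ) 1)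
    (hcov : ∀ i, Icc (a (i+1)) (b (i+1)) ⊆ g '' Icc (a i) (b i)) :
    ∃ p q : ℕ → ℝ,
      (∀ i, p i ≤ q i) ∧
      Icc (p 0) (q 0) = Icc (a 0) (b 0) ∧
      (∀ i, Icc (p (i+1)) (q (i+1)) ⊆ Icc (p i) (q i)) ∧
      (∀ i, g^[i] '' Icc (p i) (q i) = Icc (a i) (b i)) := by
  have step : ∀ i p q, Icc p q ⊆ Icc 0 1 → g^[i] '' Icc p q = Icc (a i) (b i) →
      ∃ p' q', p' ≤ q' ∧ Icc p' q' ⊆ Icc p q ∧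
        g^[i + 1] '' Icc p' q' = Icc (a (i + 1)) (b (i + 1)) := by
    intro i p q hI himg
    refine exists_Icc_subset_image_eq_Icc ((hg.iterate hmap (i + 1)).mono hI) (hab (i + 1)) ?_
    rw [Function.iterate_succ', image_comp, himg]
    exact hcov i
  obtain ⟨Q, hQ₀, hQ⟩ := exists_nat_seq_of_step
    (fun i (Q : ℝ × ℝ) =>
      Q.1 ≤ Q.2 ∧ Icc Q.1 Q.2 ⊆ Icc 0 1 ∧ g^[i] '' Icc Q.1 Q.2 = Icc (a i) (b i))
    (fun Q' Q => Icc Q'.1 Q'.2 ⊆ Icc Q.1 Q.2) (x₀ := (a 0, b 0)) ⟨hab 0, hsub 0, image_id _⟩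
    fun i ⟨p, q⟩ ⟨_, hI, himg⟩ =>
      let ⟨p', q', hpq', hsub', himg'⟩ := step i p q hI himg
      ⟨(p', q'), ⟨hpq', hsub'.trans hI, himg'⟩, hsub'⟩
  exact ⟨fun i => (Q i).1, fun i => (Q i).2, fun i => (hQ i).1.1, by simp only [hQ₀],
    fun i => (hQ i).2, fun i => (hQ i).1.2.2⟩
end

section
/- Let f : [0,1] → [0,1] be continuous with a point a such that f(a) = b, f(b) = c, f(c) = a and c < a < b (a 3-cycle with c ≤ f(b) pattern as in Li–Yorke). Then for every positive integer p there exists a point of least period p. -/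
/-!
Li–Yorke.  Put `J = [a, b]` and `I = [c, a]`; the intermediate value theorem gives
`J ⊆ f(J)`, `I ⊆ f(J)` and `J ⊆ f(I)`.  Whenever compact intervals `J₀, …, Jₙ = J₀` satisfy
`Jₖ₊₁ ⊆ f(Jₖ)`, pulling `J₀` back one step at a time yields a subinterval `Q ⊆ J₀` with
`fⁿ(Q) = J₀ ⊇ Q`, hence a fixed point `x` of `fⁿ` with `fᵏ x ∈ Jₖ`.  For the loop
`J, …, J, I, J` of length `p` such an `x` has least period `p`: a smaller period would put
`f^(p-1) x` in `I ∩ J = {a}`, so `x = f a = b` and `f x = c ∉ J`.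
-/

open Set Function OrderDual

section IntervalCovers

variable {α δ : Type*} [ConditionallyCompleteLinearOrder α] [TopologicalSpace α]
  [OrderTopology α] [DenselyOrdered α]
  [LinearOrder δ] [TopologicalSpace δ] [OrderClosedTopology δ]

/-- `v` is the first point of `[a, b]` where `g` takes the value `g b`, and `u` the last point of
`[a, v]` where it takes the value `g a`; by the intermediate value theorem `g` stays between
`g a` and `g b` on `[u, v]`. -/
theorem exists_Icc_subset_Icc_image_eq {g : α → δ} {a b : α} (hab : a ≤ b)
    (hg : ContinuousOn g (Icc a b)) (hle : g a ≤ g b) :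
    ∃ u v, Icc u v ⊆ Icc a b ∧ g '' Icc u v = Icc (g a) (g b) := by
  set B := Icc a b ∩ g ⁻¹' {g b}
  have hBbdd : BddBelow B := ⟨a, fun x hx => hx.1.1⟩
  have hv : sInf B ∈ B :=
    (hg.preimage_isClosed_of_isClosed isClosed_Icc isClosed_singleton).csInf_mem
      ⟨b, right_mem_Icc.2 hab, rfl⟩ hBbdd
  set v := sInf B
  set A := Icc a v ∩ g ⁻¹' {g a}
  have hAbdd : BddAbove A := ⟨v, fun x hx => hx.1.2⟩
  have hu : sSup A ∈ A := ((hg.mono (Icc_subset_Icc_right hv.1.2)).preimage_isClosed_of_isClosed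
    isClosed_Icc isClosed_singleton).csSup_mem ⟨a, left_mem_Icc.2 hv.1.1, rfl⟩ hAbdd
  set u := sSup A
  have hgu : g u = g a := hu.2
  have hgv : g v = g b := hv.2
  have huv : Icc u v ⊆ Icc a b := Icc_subset_Icc hu.1.1 hv.1.2
  refine ⟨u, v, huv, subset_antisymm ?_ ?_⟩
  · rintro _ ⟨w, hw, rfl⟩
    constructor
    · by_contra! hlt
      obtain ⟨z, hz, hgz⟩ := intermediate_value_Icc hw.2
        (hg.mono (huv.trans' (Icc_subset_Icc_left hw.1))) ⟨hlt.le, hgv ▸ hle⟩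
      have hzu : z ≤ u := le_csSup hAbdd ⟨⟨hu.1.1.trans (hw.1.trans hz.1), hz.2⟩, hgz⟩
      exact hlt.ne (le_antisymm hz.1 (hzu.trans hw.1) ▸ hgz)
    · by_contra! hlt
      obtain ⟨z, hz, hgz⟩ := intermediate_value_Icc (hu.1.1.trans hw.1)
        (hg.mono (Icc_subset_Icc_right (hw.2.trans hv.1.2))) ⟨hle, hlt.le⟩
      have hvz : v ≤ z := csInf_le hBbdd ⟨⟨hz.1, hz.2.trans (hw.2.trans hv.1.2)⟩, hgz⟩
      exact hlt.ne' (le_antisymm hz.2 (hw.2.trans hvz) ▸ hgz)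
  · simpa only [hgu, hgv] using intermediate_value_Icc hu.1.2 (hg.mono huv)

theorem Set.SurjOn.exists_Icc_subset_image_eq {g : α → δ} {I : Set α} {s t : δ}
    (h : SurjOn g I (Icc s t)) (hI : I.OrdConnected) (hg : ContinuousOn g I) (hst : s ≤ t) :
    ∃ u v, Icc u v ⊆ I ∧ g '' Icc u v = Icc s t := by
  obtain ⟨x, hx, rfl⟩ := h (left_mem_Icc.2 hst)
  obtain ⟨y, hy, rfl⟩ := h (right_mem_Icc.2 hst)
  rcases le_total x y with hxy | hyx
  · obtain ⟨u, v, huv, himg⟩ := exists_Icc_subset_Icc_image_eq hxy (hg.mono (hI.out hx hy)) hst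
    exact ⟨u, v, huv.trans (hI.out hx hy), himg⟩
  · have hg' : ContinuousOn (g ∘ ofDual) (Icc (toDual x) (toDual y)) := by
      rw [Icc_toDual]; exact hg.comp continuous_ofDual.continuousOn (hI.out hy hx)
    obtain ⟨u, v, huv, himg⟩ := exists_Icc_subset_Icc_image_eq
      (show toDual x ≤ toDual y from hyx) hg' hst
    have hdual : Icc (ofDual v) (ofDual u) = ofDual '' Icc u v := by ext z; simp
    refine ⟨ofDual v, ofDual u, ?_, by rwa [hdual, ← image_comp]⟩
    rw [hdual]
    rintro _ ⟨w, hw, rfl⟩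
    exact hI.out hy hx ⟨(huv hw).2, (huv hw).1⟩

end IntervalCovers

theorem continuousOn_iterate_of_mapsTo {X : Type*} [TopologicalSpace X] {f : X → X}
    {s : Set X} {J : ℕ → Set X} {n : ℕ} (hf : ∀ k < n, ContinuousOn f (J k))
    (hmaps : ∀ k < n, MapsTo f^[k] s (J k)) : ContinuousOn f^[n] s := by
  induction n with
  | zero => exact continuousOn_id
  | succ n ih =>
    rw [iterate_succ']
    exact (hf n n.lt_succ_self).comp (ih (fun k hk => hf k (by omega))
      (fun k hk => hmaps k (by omega))) (hmaps n n.lt_succ_self)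

section IntervalLoops

variable {α : Type*} [ConditionallyCompleteLinearOrder α] [TopologicalSpace α] [OrderTopology α]
  [DenselyOrdered α] {f : α → α} {J : ℕ → Set α}

theorem exists_Icc_mapsTo_iterate_image_eq {n : ℕ} (hJ : ∀ k < n, (J k).OrdConnected)
    (hf : ∀ k < n, ContinuousOn f (J k)) (hsurj : ∀ k < n, SurjOn f (J k) (J (k + 1)))
    {s t : α} (hst : s ≤ t) (hK : Icc s t ⊆ J n) :
    ∃ u v, Icc u v ⊆ J 0 ∧ (∀ k ≤ n, MapsTo f^[k] (Icc u v) (J k)) ∧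
      f^[n] '' Icc u v = Icc s t := by
  induction n generalizing J with
  | zero =>
    exact ⟨s, t, hK, fun k hk => by obtain rfl := Nat.le_zero.1 hk; exact hK, image_id _⟩
  | succ n ih =>
    obtain ⟨u', v', hQ', hmaps', himg'⟩ := ih (J := fun k => J (k + 1))
      (fun k hk => hJ _ (by omega)) (fun k hk => hf _ (by omega))
      (fun k hk => hsurj _ (by omega)) hK
    have huv' : u' ≤ v' := nonempty_Icc.1 ((himg' ▸ nonempty_Icc.2 hst).of_image)
    have hsurj' : SurjOn f (J 0) (Icc u' v') := (hsurj 0 (by omega)).mono subset_rfl hQ'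
    obtain ⟨u, v, hQ, himg⟩ :=
      hsurj'.exists_Icc_subset_image_eq (hJ 0 (by omega)) (hf 0 (by omega)) huv'
    refine ⟨u, v, hQ, fun k hk => ?_, by rw [iterate_succ, image_comp, himg, himg']⟩
    rcases k with _ | k
    · exact hQ
    · rw [iterate_succ]
      exact (hmaps' k (by omega)).comp (himg ▸ mapsTo_image f (Icc u v))

theorem exists_isPeriodicPt_of_surjOn_loop {n : ℕ} {a b : α} (hab : a ≤ b) (h0 : J 0 = Icc a b)
    (hn : J n = Icc a b) (hJ : ∀ k < n, (J k).OrdConnected) (hf : ∀ k < n, ContinuousOn f (J k))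
    (hsurj : ∀ k < n, SurjOn f (J k) (J (k + 1))) :
    ∃ x ∈ J 0, IsPeriodicPt f n x ∧ ∀ k ≤ n, f^[k] x ∈ J k := by
  obtain ⟨u, v, hQ, hmaps, himg⟩ :=
    exists_Icc_mapsTo_iterate_image_eq hJ hf hsurj hab hn.symm.subset
  have huv : u ≤ v := nonempty_Icc.1 ((himg ▸ nonempty_Icc.2 hab).of_image)
  have hcont : ContinuousOn f^[n] (Icc u v) :=
    continuousOn_iterate_of_mapsTo hf fun k hk => hmaps k hk.le
  obtain ⟨x, hx, hfix⟩ := exists_mem_Icc_isFixedPt_of_surjOn hcont huv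
    (himg ▸ h0 ▸ hQ : Icc u v ⊆ f^[n] '' Icc u v)
  exact ⟨x, hQ hx, hfix, fun k hk => hmaps k hk hx⟩

end IntervalLoops

section PeriodThreeLoop

variable {α : Type*} [LinearOrder α]

def periodThreeLoop (a b c : α) (p k : ℕ) : Set α :=
  if k = p - 1 then Icc c a else Icc a b

theorem iterate_ne_self_of_mem_periodThreeLoop {f : α → α} {a b c x : α} {p k : ℕ}
    (hfa : f a = b) (hfb : f b = c) (hca : c < a) (hx : IsPeriodicPt f p x)
    (hloop : ∀ j ≤ p, f^[j] x ∈ periodThreeLoop a b c p j) (hk : 0 < k) (hkp : k < p) :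
    f^[k] x ≠ x := by
  intro hkx
  have hlast : f^[p - 1] x ∈ Icc c a := by simpa [periodThreeLoop] using hloop (p - 1) (by omega)
  have hmod : f^[(p - 1) % k] x ∈ Icc a b := by
    have : (p - 1) % k ≠ p - 1 := by have := Nat.mod_lt (p - 1) hk; omega
    simpa [periodThreeLoop, this] using
      hloop ((p - 1) % k) ((Nat.mod_le _ _).trans (Nat.sub_le _ _))
  rw [IsPeriodicPt.iterate_mod_apply hkx] at hmod
  have hpa : f^[p - 1] x = a := le_antisymm hlast.2 hmod.1
  have hxb : x = b := by
    obtain ⟨q, rfl⟩ : ∃ q, p = q + 1 := ⟨p - 1, by omega⟩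
    rw [Nat.add_sub_cancel] at hpa
    rw [← hx.eq, iterate_succ_apply', hpa, hfa]
  have hfx : f^[1] x = c := by rw [iterate_one, hxb, hfb]
  by_cases h1 : 1 = p - 1
  · exact hca.ne (hfx.symm.trans (h1 ▸ hpa))
  · have := hloop 1 (by omega)
    simp only [periodThreeLoop, h1, if_false, hfx] at this
    exact hca.not_ge this.1

theorem periodThreeLoop_subset_Icc {a b c : α} (hca : c ≤ a) (hab : a ≤ b) (p k : ℕ) :
    periodThreeLoop a b c p k ⊆ Icc c b := by
  unfold periodThreeLoop
  split_ifs
  exacts [Icc_subset_Icc_right hab, Icc_subset_Icc_left hca]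

theorem ordConnected_periodThreeLoop (a b c : α) (p k : ℕ) :
    (periodThreeLoop a b c p k).OrdConnected := by
  unfold periodThreeLoop
  split_ifs <;> exact ordConnected_Icc

end PeriodThreeLoop

theorem surjOn_periodThreeLoop {α : Type*} [ConditionallyCompleteLinearOrder α]
    [TopologicalSpace α] [OrderTopology α] [DenselyOrdered α] {f : α → α} {a b c : α}
    (hf : ContinuousOn f (Icc c b)) (hfa : f a = b) (hfb : f b = c) (hfc : f c = a)
    (hca : c < a) (hab : a < b) (p k : ℕ) :
    SurjOn f (periodThreeLoop a b c p k) (periodThreeLoop a b c p (k + 1)) := by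
  have hfab : SurjOn f (Icc a b) (Icc c b) := fun y hy =>
    intermediate_value_Icc' hab.le (hf.mono (Icc_subset_Icc_left hca.le)) (by rwa [hfa, hfb])
  have hfca : SurjOn f (Icc c a) (Icc a b) := fun y hy =>
    intermediate_value_Icc hca.le (hf.mono (Icc_subset_Icc_right hab.le)) (by rwa [hfa, hfc])
  unfold periodThreeLoop
  split_ifs
  · omega
  · exact hfca
  · exact hfab.mono subset_rfl (Icc_subset_Icc_right hab.le)
  · exact hfab.mono subset_rfl (Icc_subset_Icc_left hca.le)

theorem period_three_implies_all_periods_general (f : ℝ → ℝ)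
    (hf : ContinuousOn f (Icc 0 1))
    (a b c : ℝ) (hb : b ∈ Icc (0:ℝ) 1)
    (hc : c ∈ Icc (0:ℝ) 1)
    (hfa : f a = b) (hfb : f b = c) (hfc : f c = a)
    (hca : c < a) (hab : a < b) :
    ∀ p : ℕ, 0 < p →
      ∃ x ∈ Icc (0:ℝ) 1, f^[p] x = x ∧ ∀ k, 0 < k → k < p → f^[k] x ≠ x := by
  intro p hp
  have hcb : Icc c b ⊆ Icc 0 1 := Icc_subset_Icc hc.1 hb.2
  have hab01 : Icc a b ⊆ Icc 0 1 := (Icc_subset_Icc_left hca.le).trans hcb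
  have hf' : ContinuousOn f (Icc c b) := hf.mono hcb
  rcases (Nat.succ_le_of_lt hp).eq_or_lt with rfl | hp2
  · have hsurj : SurjOn f (Icc a b) (Icc a b) := by
      simpa [periodThreeLoop] using surjOn_periodThreeLoop hf' hfa hfb hfc hca hab 1 1
    obtain ⟨x, hx, hfix⟩ := exists_mem_Icc_isFixedPt_of_surjOn
      (hf'.mono (Icc_subset_Icc_left hca.le)) hab.le hsurj
    exact ⟨x, hab01 hx, hfix, fun k hk hk1 => absurd hk1 (by omega)⟩
  · have hends : ∀ k, k = 0 ∨ k = p → periodThreeLoop a b c p k = Icc a b := by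
      rintro k (rfl | rfl) <;> exact if_neg (by omega)
    obtain ⟨x, hx, hper, hloop⟩ := exists_isPeriodicPt_of_surjOn_loop hab.le
      (hends 0 (.inl rfl)) (hends p (.inr rfl)) (fun k _ => ordConnected_periodThreeLoop a b c p k)
      (fun k _ => hf'.mono (periodThreeLoop_subset_Icc hca.le hab.le p k))
      (fun k _ => surjOn_periodThreeLoop hf' hfa hfb hfc hca hab p k)
    refine ⟨x, hab01 (hends 0 (.inl rfl) ▸ hx), hper, fun k hk hkp => ?_⟩
    exact iterate_ne_self_of_mem_periodThreeLoop hfa hfb hca hper hloop hk hkp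

theorem period_three_implies_all_periods (f : ℝ → ℝ)
    (hf : ContinuousOn f (Icc 0 1)) (hmap : MapsTo f (Icc 0 1) (Icc 0 1))
    (a b c : ℝ) (ha : a ∈ Icc (0:ℝ) 1) (hb : b ∈ Icc (0:ℝ) 1)
    (hc : c ∈ Icc (0:ℝ) 1)
    (hfa : f a = b) (hfb : f b = c) (hfc : f c = a)
    (hca : c < a) (hab : a < b) :
    ∀ p : ℕ, 0 < p →
      ∃ x ∈ Icc (0:ℝ) 1, f^[p] x = x ∧ ∀ k, 0 < k → k < p → f^[k] x ≠ x :=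
  period_three_implies_all_periods_general f hf a b c hb hc hfa hfb hfc hca hab
end

section
/- Let f : [0,1] → [0,1] be continuous with points satisfying f(v) < u < v ≤ f(u) for some u < v, together with a finite f-loop B₀ = [u,v], B₁, …, B_p with B₁ ⊆ [f(v), u], B_{p−1} ∩ (u, v) = ∅, and B_{i+1} ⊆ f(Bᵢ) for all i < p, B_p ⊇ B₀. Then f is Li–Yorke chaotic: there exists an uncountable set S ⊆ [0,1] such that for all distinct p, q ∈ S, liminf |fⁱ(p) − fⁱ(q)| = 0 and limsup |fⁱ(p) − fⁱ(q)| > 0. -/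
/-!
A fixed point `z ∈ (u, v)` lets one enter the loop `B 1 → ⋯ → B p → B 0` from `[u, v]` in two
ways: directly, or after a detour through `[z, v]`. Pulling the loop back along these two routes
gives disjoint compact intervals `R, S ⊆ [u, v]` that `g = f^[p+1]` both maps over `[u, v]`.
For such a horseshoe, every sequence of letters `R`, `S` is realised by an orbit; inserting, at
the `k`-th step, a passage through a common interval of length at most `|R ∪ S| / 2 ^ (k + 1)`
(one of the `2 ^ (k + 1)` disjoint intervals realising words of length `k + 1` is that short)
makes any two such orbits come arbitrarily close, while itineraries that differ infinitely often
keep them `dist R S` apart infinitely often. Both properties pass from `g` to `f`.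
-/

open Set Filter Function MeasureTheory Topology

def IsCompactInterval (s : Set ℝ) : Prop := ∃ a b, a ≤ b ∧ s = Icc a b

lemma isCompactInterval_Icc {a b : ℝ} (h : a ≤ b) : IsCompactInterval (Icc a b) := ⟨a, b, h, rfl⟩

namespace IsCompactInterval

variable {s : Set ℝ}

lemma isCompact (hs : IsCompactInterval s) : IsCompact s := by
  obtain ⟨a, b, -, rfl⟩ := hs
  exact isCompact_Icc

lemma nonempty (hs : IsCompactInterval s) : s.Nonempty := by
  obtain ⟨a, b, hab, rfl⟩ := hs
  exact nonempty_Icc.2 hab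

lemma ofReal_abs_sub_le_volume (hs : IsCompactInterval s) {x y : ℝ} (hx : x ∈ s) (hy : y ∈ s) :
    ENNReal.ofReal |x - y| ≤ volume s := by
  obtain ⟨a, b, -, rfl⟩ := hs
  rw [Real.volume_Icc, ← Real.dist_eq]
  exact ENNReal.ofReal_le_ofReal (Real.dist_le_of_mem_Icc hx hy)

end IsCompactInterval

/-- `b` is the first point where `F` takes the value `F t`, and `a` the last point before `b`
where it takes the value `F s`; in between, `F` cannot leave `[F s, F t]`. -/
lemma exists_Icc_image_eq_Icc {F : ℝ → ℝ} {s t : ℝ} (hst : s ≤ t)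
    (hF : ContinuousOn F (Icc s t)) (hFst : F s ≤ F t) :
    ∃ a b, s ≤ a ∧ a ≤ b ∧ b ≤ t ∧ F '' Icc a b = Icc (F s) (F t) := by
  have hlevel : ∀ {r} (c : ℝ), r ≤ t → IsCompact (Icc s r ∩ F ⁻¹' {c}) := fun c hr =>
    isCompact_Icc.of_isClosed_subset
      ((hF.mono (Icc_subset_Icc le_rfl hr)).preimage_isClosed_of_isClosed isClosed_Icc
        isClosed_singleton) inter_subset_left
  obtain ⟨b, ⟨⟨hsb, hbt⟩, hFb : F b = F t⟩, hb⟩ :=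
    (hlevel (F t) le_rfl).exists_isLeast ⟨t, ⟨hst, le_rfl⟩, rfl⟩
  obtain ⟨a, ⟨⟨hsa, hab⟩, hFa : F a = F s⟩, ha⟩ :=
    (hlevel (F s) hbt).exists_isGreatest ⟨s, ⟨le_rfl, hsb⟩, rfl⟩
  have hFab : ContinuousOn F (Icc a b) := hF.mono (Icc_subset_Icc hsa hbt)
  refine ⟨a, b, hsa, hab, hbt, Subset.antisymm ?_ ?_⟩
  · rintro _ ⟨x, ⟨hax, hxb⟩, rfl⟩
    constructor
    · by_contra! hlt
      obtain ⟨y, ⟨hxy, hyb⟩, hFy⟩ := intermediate_value_Icc hxb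
        (hFab.mono (Icc_subset_Icc hax le_rfl)) ⟨hlt.le, hFb ▸ hFst⟩
      have hxa : x = a := le_antisymm (hxy.trans (ha ⟨⟨hsa.trans (hax.trans hxy), hyb⟩, hFy⟩)) hax
      exact hlt.ne (by rw [hxa, hFa])
    · by_contra! hlt
      obtain ⟨y, ⟨hay, hyx⟩, hFy⟩ := intermediate_value_Icc hax
        (hFab.mono (Icc_subset_Icc le_rfl hxb)) ⟨hFa ▸ hFst, hlt.le⟩
      have hxb' : x = b :=
        le_antisymm hxb ((hb ⟨⟨hsa.trans hay, (hyx.trans hxb).trans hbt⟩, hFy⟩).trans hyx)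
      exact hlt.ne' (by rw [hxb', hFb])
  · simpa only [hFa, hFb] using intermediate_value_Icc hab hFab

lemma IsCompactInterval.exists_image_eq {F : ℝ → ℝ} {I J : Set ℝ} (hI : IsCompactInterval I)
    (hJ : IsCompactInterval J) (hF : ContinuousOn F I) (hJI : J ⊆ F '' I) :
    ∃ Q, IsCompactInterval Q ∧ Q ⊆ I ∧ F '' Q = J := by
  obtain ⟨A, B, -, rfl⟩ := hI
  obtain ⟨c, d, hcd, rfl⟩ := hJ
  obtain ⟨α, hα, rfl⟩ := hJI (left_mem_Icc.2 hcd)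
  obtain ⟨β, hβ, rfl⟩ := hJI (right_mem_Icc.2 hcd)
  rcases le_total α β with hαβ | hβα
  · obtain ⟨a, b, hαa, hab, hbβ, himage⟩ :=
      exists_Icc_image_eq_Icc hαβ (hF.mono (Icc_subset_Icc hα.1 hβ.2)) hcd
    exact ⟨Icc a b, isCompactInterval_Icc hab, Icc_subset_Icc (hα.1.trans hαa) (hbβ.trans hβ.2),
      himage⟩
  · obtain ⟨a, b, hβa, hab, hbα, himage⟩ :=
      exists_Icc_image_eq_Icc hβα (hF.mono (Icc_subset_Icc hβ.1 hα.2)).neg (neg_le_neg hcd)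
    refine ⟨Icc a b, isCompactInterval_Icc hab,
      Icc_subset_Icc (hβ.1.trans hβa) (hbα.trans hα.2), ?_⟩
    simpa [image_image, image_neg_Icc] using congrArg (Neg.neg '' ·) himage

lemma exists_isCompactInterval_iterate_image {F : ℝ → ℝ} :
    ∀ (N : ℕ) {V : ℕ → Set ℝ}, (∀ i ≤ N, IsCompactInterval (V i)) →
      (∀ i < N, ContinuousOn F (V i)) → (∀ i < N, V (i + 1) ⊆ F '' V i) →
      ∃ Q, IsCompactInterval Q ∧ (∀ i ≤ N, F^[i] '' Q ⊆ V i) ∧ F^[N] '' Q = V N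
  | 0, V, hV, _, _ => ⟨V 0, hV 0 le_rfl, fun i hi => by simp [Nat.le_zero.1 hi], by simp⟩
  | N + 1, V, hV, hF, hcov => by
    obtain ⟨Q', hQ', hQ'V, hQ'N⟩ :=
      exists_isCompactInterval_iterate_image N (V := fun i => V (i + 1))
        (fun i _ => hV _ (by omega)) (fun i _ => hF _ (by omega)) fun i _ => hcov _ (by omega)
    have hQ'V1 : Q' ⊆ V 1 := by simpa using hQ'V 0 N.zero_le
    obtain ⟨Q, hQ, hQV, hFQ⟩ :=
      (hV 0 N.succ.zero_le).exists_image_eq hQ' (hF 0 N.succ_pos) (hQ'V1.trans (hcov 0 N.succ_pos))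
    refine ⟨Q, hQ, fun i hi => ?_, by rw [iterate_succ, image_comp, hFQ, hQ'N]⟩
    cases i with
    | zero => simpa using hQV
    | succ i => rw [iterate_succ, image_comp, hFQ]; exact hQ'V i (by omega)

/-- Backward choice of preimages makes every finite stage of the itinerary realisable;
compactness of `J 0` does the rest. -/
lemma exists_forall_iterate_sum_mem {X : Type*} [TopologicalSpace X] {g : X → X} {K : Set X}
    (hK : IsClosed K) (hg : ContinuousOn g K) (hgK : MapsTo g K K) {J : ℕ → Set X} (n : ℕ → ℕ)
    (hJ0 : IsCompact (J 0)) (hJ0K : J 0 ⊆ K) (hJ : ∀ k, IsClosed (J k))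
    (hJne : ∀ k, (J k).Nonempty) (hcov : ∀ k, J (k + 1) ⊆ g^[n k] '' J k) :
    ∃ x, ∀ k, g^[∑ i ∈ Finset.range k, n i] x ∈ J k := by
  have hback : ∀ m, ∀ y ∈ J m, ∃ x ∈ J 0,
      (∀ k ≤ m, g^[∑ i ∈ Finset.range k, n i] x ∈ J k) ∧ g^[∑ i ∈ Finset.range m, n i] x = y := by
    intro m
    induction m with
    | zero => exact fun y hy => ⟨y, hy, fun k hk => by simpa [Nat.le_zero.1 hk] using hy, by simp⟩
    | succ m ih =>
      intro y hy
      obtain ⟨y', hy', rfl⟩ := hcov m hy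
      obtain ⟨x, hx, hxk, rfl⟩ := ih y' hy'
      have hstep : g^[∑ i ∈ Finset.range (m + 1), n i] x =
          g^[n m] (g^[∑ i ∈ Finset.range m, n i] x) := by
        rw [Finset.sum_range_succ, add_comm, iterate_add_apply]
      refine ⟨x, hx, fun k hk => ?_, hstep⟩
      rcases hk.lt_or_eq with hk | rfl
      · exact hxk k (by omega)
      · rwa [hstep]
  obtain ⟨x, -, hx⟩ := hJ0.inter_iInter_nonempty
    (fun k => K ∩ g^[∑ i ∈ Finset.range k, n i] ⁻¹' J k)
    (fun k => (hg.iterate hgK _).preimage_isClosed_of_isClosed hK (hJ k)) fun u => by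
      obtain ⟨y, hy⟩ := hJne (u.sup id)
      obtain ⟨x, hx, hxk, -⟩ := hback _ y hy
      exact ⟨x, hx, mem_iInter₂.2 fun k hk =>
        ⟨hJ0K hx, hxk k (Finset.le_sup (f := id) hk)⟩⟩
  exact ⟨x, fun k => (mem_iInter.1 hx k).2⟩

lemma exists_measure_le_div_card {α ι : Type*} [MeasurableSpace α] (μ : Measure α) {s : Finset ι}
    (hs : s.Nonempty) {t : ι → Set α} {A : Set α} (hdisj : (s : Set ι).PairwiseDisjoint t)
    (hmeas : ∀ i ∈ s, MeasurableSet (t i)) (hA : ∀ i ∈ s, t i ⊆ A) :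
    ∃ i ∈ s, μ (t i) ≤ μ A / s.card := by
  by_contra! h
  have hcard : (s.card : ENNReal) ≠ 0 := Nat.cast_ne_zero.2 hs.card_pos.ne'
  refine lt_irrefl (μ A) ?_
  calc μ A = ∑ _i ∈ s, μ A / s.card := by
        rw [Finset.sum_const, nsmul_eq_mul, ENNReal.mul_div_cancel hcard (ENNReal.natCast_ne_top _)]
    _ < ∑ i ∈ s, μ (t i) := ENNReal.sum_lt_sum_of_nonempty hs h
    _ = μ (⋃ i ∈ s, t i) := (measure_biUnion_finset hdisj hmeas).symm
    _ ≤ μ A := measure_mono (iUnion₂_subset hA)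

lemma exists_pos_le_abs_sub_of_disjoint {s t : Set ℝ} (hs : IsCompact s) (ht : IsClosed t)
    (hst : Disjoint s t) : ∃ δ > 0, ∀ x ∈ s, ∀ y ∈ t, δ ≤ |x - y| := by
  obtain ⟨r, hr, h⟩ := Metric.exists_pos_forall_lt_edist hs ht hst
  refine ⟨r, hr, fun x hx y hy => ?_⟩
  have := h x hx y hy
  rw [edist_dist, Real.dist_eq, ← ENNReal.ofReal_coe_nnreal,
    ENNReal.ofReal_lt_ofReal_iff_of_nonneg r.coe_nonneg] at this
  exact this.le

lemma frequently_ne_unpair_fst {t t' : ℕ → Bool} (h : t ≠ t') :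
    ∃ᶠ k : ℕ in atTop, t k.unpair.1 ≠ t' k.unpair.1 := by
  obtain ⟨j, hj⟩ := Function.ne_iff.1 h
  refine frequently_atTop.2 fun m => ⟨Nat.pair j m, Nat.right_le_pair j m, ?_⟩
  simpa only [Nat.unpair_pair] using hj

instance : Uncountable (ℕ → Bool) :=
  uncountable_iff_forall_not_surjective.2 fun e he => by
    obtain ⟨n, hn⟩ := he fun k => !e k k
    simpa using congrFun hn n

/-- The Li–Yorke condition `liminf = 0 < limsup` in a form that needs no bounded orbits. -/
def IsLiYorkePair (f : ℝ → ℝ) (x y : ℝ) : Prop :=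
  (∀ ε > 0, ∃ᶠ i in atTop, |f^[i] x - f^[i] y| < ε) ∧
    ∃ δ > 0, ∃ᶠ i in atTop, δ ≤ |f^[i] x - f^[i] y|

namespace IsLiYorkePair

variable {f : ℝ → ℝ} {x y : ℝ}

lemma ne (h : IsLiYorkePair f x y) : x ≠ y := by
  rintro rfl
  obtain ⟨-, δ, hδ, hfreq⟩ := h
  obtain ⟨i, hi⟩ := hfreq.exists
  simp only [sub_self, abs_zero] at hi
  exact hδ.not_ge hi

lemma of_iterate {n : ℕ} (hn : 0 < n) (h : IsLiYorkePair f^[n] x y) : IsLiYorkePair f x y := by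
  have hmul : Tendsto (n * ·) atTop atTop :=
    tendsto_atTop_mono (fun i => Nat.le_mul_of_pos_left i hn) tendsto_id
  obtain ⟨hprox, δ, hδ, hsep⟩ := h
  simp only [← iterate_mul] at hprox hsep
  exact ⟨fun ε hε => hmul.frequently (hprox ε hε), δ, hδ, hmul.frequently hsep⟩

lemma liminf_eq_zero_and_limsup_pos (h : IsLiYorkePair f x y) {a b : ℝ}
    (hf : MapsTo f (Icc a b) (Icc a b)) (hx : x ∈ Icc a b) (hy : y ∈ Icc a b) :
    liminf (fun i => |f^[i] x - f^[i] y|) atTop = 0 ∧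
      0 < limsup (fun i => |f^[i] x - f^[i] y|) atTop := by
  have hle : IsBoundedUnder (· ≤ ·) atTop fun i => |f^[i] x - f^[i] y| :=
    isBoundedUnder_of ⟨b - a, fun i => by
      simpa [Real.dist_eq] using Real.dist_le_of_mem_Icc (hf.iterate i hx) (hf.iterate i hy)⟩
  have hge : IsBoundedUnder (· ≥ ·) atTop fun i => |f^[i] x - f^[i] y| :=
    isBoundedUnder_of ⟨0, fun i => abs_nonneg _⟩
  obtain ⟨hprox, δ, hδ, hsep⟩ := h
  refine ⟨le_antisymm (le_of_forall_pos_le_add fun ε hε => ?_) ?_,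
    hδ.trans_le (le_limsup_of_frequently_le hsep hle)⟩
  · rw [zero_add]
    exact liminf_le_of_frequently_le ((hprox ε hε).mono fun _ hi => hi.le) hge
  · exact le_liminf_of_le hle.isCoboundedUnder_ge (Eventually.of_forall fun i => abs_nonneg _)

end IsLiYorkePair

open Fin.NatCast in
/-- Among the `2 ^ (n + 1)` intervals realising the words of length `n + 1` over `L`, which are
pairwise disjoint, one has at most the average volume. -/
lemma exists_isCompactInterval_volume_le_iterate_image {g : ℝ → ℝ} {L : Bool → Set ℝ}
    (hL : ∀ b, IsCompactInterval (L b))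
    (hgL : ∀ b, ContinuousOn g (L b)) (hLd : Pairwise (Disjoint on L))
    (hcov : ∀ b b', L b' ⊆ g '' L b) (n : ℕ) :
    ∃ Q, IsCompactInterval Q ∧ Q ⊆ ⋃ b, L b ∧ volume Q ≤ volume (⋃ b, L b) / 2 ^ (n + 1) ∧
      ∀ b, L b ⊆ g^[n + 1] '' Q := by
  have hword : ∀ w : Fin (n + 1) → Bool, ∃ Q, IsCompactInterval Q ∧
      (∀ i ≤ n, g^[i] '' Q ⊆ L (w i)) ∧ g^[n] '' Q = L (w n) := fun w =>
    exists_isCompactInterval_iterate_image n (V := fun i => L (w i)) (fun _ _ => hL _)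
      (fun _ _ => hgL _) fun _ _ => hcov _ _
  choose Q hQ hQw hQn using hword
  have hQL : ∀ w, Q w ⊆ ⋃ b, L b := fun w =>
    (by simpa using hQw w 0 n.zero_le : Q w ⊆ L (w 0)).trans (subset_iUnion L _)
  have hdisj : Pairwise (Disjoint on Q) := by
    intro w w' hne
    obtain ⟨j, hj⟩ := Function.ne_iff.1 hne
    have h := hQw w j (Nat.lt_succ_iff.1 j.isLt)
    have h' := hQw w' j (Nat.lt_succ_iff.1 j.isLt)
    rw [Fin.cast_val_eq_self] at h h'
    exact ((hLd hj).preimage _).mono (image_subset_iff.1 h) (image_subset_iff.1 h')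
  obtain ⟨w, -, hw⟩ := exists_measure_le_div_card volume Finset.univ_nonempty (hdisj.set_pairwise _)
    (fun w _ => (hQ w).isCompact.isClosed.measurableSet) fun w _ => hQL w
  refine ⟨Q w, hQ w, hQL w, by simpa using hw, fun b => ?_⟩
  rw [iterate_succ', image_comp, hQn]
  exact hcov _ b

/-- The orbits follow arbitrary itineraries in the letters `R`, `S`, interleaved with passages
through intervals `Q' k` that are common to all itineraries and shrink to length `0`. -/
theorem exists_uncountable_pairwise_isLiYorkePair {g : ℝ → ℝ} {K R S : Set ℝ} (hK : IsClosed K)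
    (hg : ContinuousOn g K) (hgK : MapsTo g K K) (hR : IsCompactInterval R)
    (hS : IsCompactInterval S) (hRSK : R ∪ S ⊆ K) (hRS : Disjoint R S) (hgR : R ∪ S ⊆ g '' R)
    (hgS : R ∪ S ⊆ g '' S) :
    ∃ T ⊆ R ∪ S, ¬ T.Countable ∧ T.Pairwise (IsLiYorkePair g) := by
  set L : Bool → Set ℝ := fun b => cond b R S
  have hLRS : ⋃ b, L b = R ∪ S := union_eq_iUnion.symm
  have hL : ∀ b, IsCompactInterval (L b) := Bool.forall_bool.2 ⟨hS, hR⟩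
  have hLK : ∀ b, L b ⊆ K := fun b => (subset_iUnion L b).trans (hLRS ▸ hRSK)
  have hgL : ∀ b, ContinuousOn g (L b) := fun b => hg.mono (hLK b)
  have hcov : ∀ b b', L b' ⊆ g '' L b := fun b b' =>
    (subset_iUnion L b').trans (hLRS ▸ by cases b; exacts [hgS, hgR])
  obtain ⟨δ, hδ, hRSδ⟩ := exists_pos_le_abs_sub_of_disjoint hR.isCompact hS.isCompact.isClosed hRS
  have hsep : ∀ b b', b ≠ b' → ∀ x ∈ L b, ∀ y ∈ L b', δ ≤ |x - y| := by
    rintro (_ | _) (_ | _) h x hx y hy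
    exacts [absurd rfl h, abs_sub_comm x y ▸ hRSδ y hy x hx, hRSδ x hx y hy, absurd rfl h]
  choose Q' hQ' hQ'L hQ'vol hQ'cov using
    exists_isCompactInterval_volume_le_iterate_image hL hgL (pairwise_disjoint_on_bool.2 hRS) hcov
  choose Q hQ hQL hgQ using fun k b =>
    (hL b).exists_image_eq (hQ' k) (hgL b) ((hQ'L k).trans (iUnion_subset (hcov b)))
  set τ : ℕ → ℕ := fun k => ∑ i ∈ Finset.range k, (i + 2)
  have hτ : Tendsto τ atTop atTop := tendsto_atTop_mono (fun k => by
    simpa using Finset.card_nsmul_le_sum (Finset.range k) (fun i => i + 2) 1 fun i _ => by omega)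
    tendsto_id
  have horbit : ∀ a : ℕ → Bool, ∃ x, ∀ k, g^[τ k] x ∈ Q k (a k) := fun a =>
    exists_forall_iterate_sum_mem hK hg hgK (fun k => k + 2) (hQ 0 _).isCompact
      ((hQL 0 _).trans (hLK _)) (fun k => (hQ k _).isCompact.isClosed) (fun k => (hQ k _).nonempty)
      fun k => by
        rw [iterate_succ, image_comp, hgQ]
        exact (hQL _ _).trans (hQ'cov k _)
  choose x hx using horbit
  set y : (ℕ → Bool) → ℝ := fun t => x fun k => t k.unpair.1
  have hvol : Tendsto (fun k : ℕ => volume (⋃ b, L b) / 2 ^ (k + 1)) atTop (𝓝 0) := by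
    have h2 : Tendsto (fun k : ℕ => (2 : ENNReal) ^ (k + 1)) atTop (𝓝 ⊤) :=
      (ENNReal.tendsto_pow_atTop_nhds_top_iff.2 ENNReal.one_lt_two).comp (tendsto_add_atTop_nat 1)
    simpa using ENNReal.Tendsto.const_div h2
      (Or.inr (isCompact_iUnion fun b => (hL b).isCompact).measure_lt_top.ne)
  have hpair : ∀ t t', t ≠ t' → IsLiYorkePair g (y t) (y t') := by
    intro t t' htt'
    refine ⟨fun ε hε => ?_, δ, hδ, hτ.frequently ((frequently_ne_unpair_fst htt').mono
      fun k hk => hsep _ _ hk _ (hQL _ _ (hx (fun k => t k.unpair.1) k)) _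
        (hQL _ _ (hx (fun k => t' k.unpair.1) k)))⟩
    have hmem : ∀ k s, g^[τ k + 1] (y s) ∈ Q' k := fun k s => by
      rw [iterate_succ_apply', ← hgQ k]
      exact mem_image_of_mem g (hx (fun k => s k.unpair.1) k)
    refine ((tendsto_add_atTop_nat 1).comp hτ).frequently
      ((hvol.eventually (gt_mem_nhds (ENNReal.ofReal_pos.2 hε))).mono fun k hk => ?_).frequently
    exact (ENNReal.ofReal_lt_ofReal_iff hε).1
      (((hQ' k).ofReal_abs_sub_le_volume (hmem k t) (hmem k t')).trans_lt ((hQ'vol k).trans_lt hk))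
  have hy : Injective y := fun t t' hyt => by_contra fun h => (hpair t t' h).ne hyt
  refine ⟨range y, range_subset_iff.2 fun t => ?_, fun hc => ?_, ?_⟩
  · simpa [← hLRS, τ] using mem_iUnion_of_mem _ (hQL _ _ (hx (fun k => t k.unpair.1) 0))
  · exact not_countable_univ ((mapsTo_range y univ).countable_of_injOn hy.injOn hc)
  · rintro _ ⟨t, rfl⟩ _ ⟨t', rfl⟩ hne
    exact hpair t t' fun h => hne (h ▸ rfl)

/-- The tail `B 1 → ⋯ → B p` of the loop is entered from `B 0` directly, giving `R`, and through
the detour `[z, v]` past a fixed point `z ∈ (u, v]`, giving `S`; the images `f '' R ⊆ B 1` and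
`f '' S ⊆ [z, v]` lie on opposite sides of `u`. -/
lemma exists_horseshoe_of_loop {f : ℝ → ℝ} {u v : ℝ} {p : ℕ} {B : ℕ → Set ℝ}
    (hf : ∀ i < p, ContinuousOn f (B i)) (huv : u < v) (hfv : f v < u) (hfu : v ≤ f u)
    (hp : 1 ≤ p) (hB : ∀ i ≤ p, IsCompactInterval (B i)) (hB0 : B 0 = Icc u v)
    (hB1 : B 1 ⊆ Icc (f v) u) (hcov : ∀ i < p, B (i + 1) ⊆ f '' B i) (hloop : B 0 ⊆ B p) :
    ∃ R S, IsCompactInterval R ∧ IsCompactInterval S ∧ Disjoint R S ∧ R ∪ S ⊆ B 0 ∧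
      B 0 ⊆ f^[p + 1] '' R ∧ B 0 ⊆ f^[p + 1] '' S := by
  obtain ⟨q, rfl⟩ : ∃ q, p = q + 1 := ⟨p - 1, by omega⟩
  have hfI : ContinuousOn f (Icc u v) := hB0 ▸ hf 0 q.succ_pos
  obtain ⟨z, ⟨huz, hzv⟩, hz⟩ := exists_mem_Icc_isFixedPt hfI huv.le (by linarith) (by linarith)
  have huz' : u < z := huz.lt_of_ne (by rintro rfl; linarith [hz.eq])
  have hIcov : Icc u v ⊆ f '' Icc u v :=
    (Icc_subset_Icc hfv.le hfu).trans (intermediate_value_Icc' huv.le hfI)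
  have hzvcov : B 1 ⊆ f '' Icc z v := by
    have := intermediate_value_Icc' hzv (hfI.mono (Icc_subset_Icc huz le_rfl))
    rw [hz.eq] at this
    exact hB1.trans ((Icc_subset_Icc le_rfl huz).trans this)
  obtain ⟨C, hC, hCB, hCq⟩ := exists_isCompactInterval_iterate_image q (V := fun i => B (i + 1))
    (fun i hi => hB _ (by omega)) (fun i hi => hf _ (by omega)) (fun i hi => hcov _ (by omega))
  have hC1 : C ⊆ B 1 := by simpa using hCB 0 q.zero_le
  obtain ⟨R, hR, hRB, hfR⟩ := (hB 0 q.succ.zero_le).exists_image_eq hC (hf 0 q.succ_pos)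
    (hC1.trans (hcov 0 q.succ_pos))
  obtain ⟨D, hD, hDzv, hfD⟩ := (isCompactInterval_Icc hzv).exists_image_eq hC
    (hfI.mono (Icc_subset_Icc huz le_rfl)) (hC1.trans hzvcov)
  obtain ⟨S, hS, hSB, hfS⟩ := (hB 0 q.succ.zero_le).exists_image_eq hD (hf 0 q.succ_pos)
    (hB0 ▸ hDzv.trans ((Icc_subset_Icc huz le_rfl).trans hIcov))
  refine ⟨R, S, hR, hS, disjoint_left.2 fun x hxR hxS => ?_, union_subset hRB hSB, ?_, ?_⟩
  · have h1 : f x ≤ u := (hB1 (hC1 (hfR ▸ mem_image_of_mem f hxR))).2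
    have h2 : z ≤ f x := (hDzv (hfS ▸ mem_image_of_mem f hxS)).1
    linarith
  · rw [iterate_succ', image_comp, iterate_succ, image_comp, hfR, hCq, hB0]
    exact hIcov.trans (image_mono (hB0 ▸ hloop))
  · rw [iterate_succ, image_comp, iterate_succ, image_comp, hfS, hfD, hCq]
    exact hloop

theorem genscramble_interval_general (f : ℝ → ℝ)
    (hf : ContinuousOn f (Icc 0 1)) (hmap : MapsTo f (Icc 0 1) (Icc 0 1))
    (u v : ℝ)
    (huv : u < v) (hfv : f v < u) (hfu : v ≤ f u)
    (p : ℕ) (hp : 1 ≤ p)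
    (B : ℕ → Set ℝ)
    (hB : ∀ i ≤ p, ∃ c e : ℝ, c ≤ e ∧ B i = Icc c e)
    (hBsub : ∀ i ≤ p, B i ⊆ Icc (0:ℝ) 1)
    (hB0 : B 0 = Icc u v)
    (hB1 : B 1 ⊆ Icc (f v) u)
    (hcov : ∀ i < p, B (i+1) ⊆ f '' B i)
    (hloop : B 0 ⊆ B p) :
    ∃ S : Set ℝ, S ⊆ Icc 0 1 ∧ ¬ S.Countable ∧
      ∀ x ∈ S, ∀ y ∈ S, x ≠ y →
        liminf (fun i => |f^[i] x - f^[i] y|) atTop = 0 ∧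
        0 < limsup (fun i => |f^[i] x - f^[i] y|) atTop := by
  obtain ⟨R, S, hR, hS, hRS, hRSB, hgR, hgS⟩ := exists_horseshoe_of_loop
    (fun i hi => hf.mono (hBsub i hi.le)) huv hfv hfu hp hB hB0 hB1 hcov hloop
  have hRSI : R ∪ S ⊆ Icc 0 1 := hRSB.trans (hBsub 0 (Nat.zero_le p))
  obtain ⟨T, hTRS, hTunc, hT⟩ := exists_uncountable_pairwise_isLiYorkePair isClosed_Icc
    (hf.iterate hmap (p + 1)) (hmap.iterate (p + 1)) hR hS hRSI hRS (hRSB.trans hgR)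
    (hRSB.trans hgS)
  exact ⟨T, hTRS.trans hRSI, hTunc, fun x hx y hy hxy =>
    ((hT hx hy hxy).of_iterate p.succ_pos).liminf_eq_zero_and_limsup_pos hmap
      (hRSI (hTRS hx)) (hRSI (hTRS hy))⟩

theorem genscramble_interval (f : ℝ → ℝ)
    (hf : ContinuousOn f (Icc 0 1)) (hmap : MapsTo f (Icc 0 1) (Icc 0 1))
    (u v : ℝ) (hu : u ∈ Icc (0:ℝ) 1) (hv : v ∈ Icc (0:ℝ) 1)
    (huv : u < v) (hfv : f v < u) (hfu : v ≤ f u)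
    (p : ℕ) (hp : 1 ≤ p)
    (B : ℕ → Set ℝ)
    (hB : ∀ i ≤ p, ∃ c e : ℝ, c ≤ e ∧ B i = Icc c e)
    (hBsub : ∀ i ≤ p, B i ⊆ Icc (0:ℝ) 1)
    (hB0 : B 0 = Icc u v)
    (hB1 : B 1 ⊆ Icc (f v) u)
    (hBp1 : B (p-1) ∩ Ioo u v = ∅)
    (hcov : ∀ i < p, B (i+1) ⊆ f '' B i)
    (hloop : B 0 ⊆ B p) :
    ∃ S : Set ℝ, S ⊆ Icc 0 1 ∧ ¬ S.Countable ∧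
      ∀ x ∈ S, ∀ y ∈ S, x ≠ y →
        liminf (fun i => |f^[i] x - f^[i] y|) atTop = 0 ∧
        0 < limsup (fun i => |f^[i] x - f^[i] y|) atTop :=
  genscramble_interval_general f hf hmap u v huv hfv hfu p hp B hB hBsub hB0 hB1 hcov hloop
end
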